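/- arXiv:2101.09506 — 2 statements merged into one kernel-verified Lean document; each statement's English description precedes it below -/
import Mathlib

section
/- The algebra Ĥ is generated by â₀ and â₁: the smallest subspace of Ĥ containing â₀ and â₁ and closed under the product equals all of Ĥ. -/
namespace HatAlgebra

/-- Basis of the algebra `Ĥ`: vectors `â i` for `i : ℤ`, `ŝ_{0̄,j}` for `j` a positive
integer, and `ŝ_{1̄,3k}`, `ŝ_{2̄,3k}` for `k` a positive integer. -/
inductive HatB : Type
  | a : ℤ → HatB
  | s0 : ℕ+ → HatB
  | s1 : ℕ+ → HatB
  | s2 : ℕ+ → HatB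
  deriving DecidableEq

variable (F : Type*) [Field F]

/-- The underlying vector space of `Ĥ`: the free `F`-vector space on `HatB`. -/
abbrev HatH : Type _ := HatB →₀ F

/-- The basis vector `â i`. -/
noncomputable def aHat (i : ℤ) : HatH F := Finsupp.single (HatB.a i) 1

/-- The element `ŝ_{r̄,j}` of `Ĥ`, with the conventions `ŝ_{r̄,0} = 0` and
`ŝ_{1̄,j} = ŝ_{0̄,j} = ŝ_{2̄,j}` whenever `3 ∤ j`. -/
noncomputable def sHat (r : ZMod 3) (j : ℕ) : HatH F :=
  if h : j = 0 then 0
  else if h3 : 3 ∣ j then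
    if r = 0 then Finsupp.single (HatB.s0 ⟨j, Nat.pos_of_ne_zero h⟩) 1
    else if r = 1 then
      Finsupp.single (HatB.s1 ⟨j / 3,
        Nat.div_pos (Nat.le_of_dvd (Nat.pos_of_ne_zero h) h3) (by norm_num)⟩) 1
    else
      Finsupp.single (HatB.s2 ⟨j / 3,
        Nat.div_pos (Nat.le_of_dvd (Nat.pos_of_ne_zero h) h3) (by norm_num)⟩) 1
  else Finsupp.single (HatB.s0 ⟨j, Nat.pos_of_ne_zero h⟩) 1

/-- The operation `∗`: `(−1) ∗ 1̄ = −1`, `(−1) ∗ 2̄ = 1`, `0 ∗ t̄ = 0`. -/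
def hatStar (x : ℤ) (t : ZMod 3) : ℤ :=
  if x = 0 then 0 else if t = 1 then -1 else if t = 2 then 1 else 0

/-- The coefficient `(δ_{ī,r̄} − 1) ∗ (ī − r̄)` appearing in rule (Ĥ2). -/
def hatC (i r : ZMod 3) : ℤ := hatStar ((if i = r then 1 else 0) - 1) (i - r)

/-- Rule (Ĥ2): the product `â_i · ŝ_{r̄,j}`. -/
noncomputable def aMulS (i : ℤ) (r : ZMod 3) (j : ℕ) : HatH F :=
  (-2 : F) • aHat F i + (aHat F (i - (j : ℤ)) + aHat F (i + (j : ℤ))) - sHat F r j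
    - (hatC (i : ZMod 3) r : F) • (sHat F (r - 1) j - sHat F (r + 1) j)

/-- `ŝ_{0̄,n} + ŝ_{1̄,n} + ŝ_{2̄,n}`. -/
noncomputable def sSum (n : ℕ) : HatH F := sHat F 0 n + sHat F 1 n + sHat F 2 n

/-- For `r ≠ t` in `ℤ/3ℤ`, the signed sum `ŝ_{r̄,n} + ŝ_{t̄,n} − ŝ_{m̄,n}` where `m̄`
is the third residue class (appearing in rules (Ĥ5), (Ĥ6), (Ĥ7)). -/
noncomputable def sT (r t : ZMod 3) (n : ℕ) : HatH F :=
  sHat F r n + sHat F t n - sHat F (-(r + t)) n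

/-- Rules (Ĥ3)–(Ĥ7): the product `ŝ_{r̄,i} · ŝ_{t̄,j}`. -/
noncomputable def sMulS (r : ZMod 3) (i : ℕ) (t : ZMod 3) (j : ℕ) : HatH F :=
  if 3 ∣ i ∧ 3 ∣ j then
    if r = t then
      (2 : F) • (sHat F r i + sHat F r j) - (sHat F r (Nat.dist i j) + sHat F r (i + j))
    else
      (2 : F) • (sT F r t i + sT F r t j) - (sT F r t (Nat.dist i j) + sT F r t (i + j))
  else
    (2 : F) • (sHat F r i + sHat F t j) - (2 : F) • (sSum F (Nat.dist i j) + sSum F (i + j))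

/-- The product of `Ĥ` on basis vectors, given by rules (Ĥ1)–(Ĥ7) (extended
symmetrically, since the product is commutative). -/
noncomputable def mulB : HatB → HatB → HatH F
  | .a i, .a j => (-2 : F) • (aHat F i + aHat F j) + sHat F (i : ZMod 3) (i - j).natAbs
  | .a i, .s0 j => aMulS F i 0 (j : ℕ)
  | .s0 j, .a i => aMulS F i 0 (j : ℕ)
  | .a i, .s1 k => aMulS F i 1 (3 * (k : ℕ))
  | .s1 k, .a i => aMulS F i 1 (3 * (k : ℕ))
  | .a i, .s2 k => aMulS F i 2 (3 * (k : ℕ))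
  | .s2 k, .a i => aMulS F i 2 (3 * (k : ℕ))
  | .s0 i, .s0 j => sMulS F 0 (i : ℕ) 0 (j : ℕ)
  | .s0 i, .s1 k => sMulS F 0 (i : ℕ) 1 (3 * (k : ℕ))
  | .s1 k, .s0 i => sMulS F 0 (i : ℕ) 1 (3 * (k : ℕ))
  | .s0 i, .s2 k => sMulS F 0 (i : ℕ) 2 (3 * (k : ℕ))
  | .s2 k, .s0 i => sMulS F 0 (i : ℕ) 2 (3 * (k : ℕ))
  | .s1 h, .s1 k => sMulS F 1 (3 * (h : ℕ)) 1 (3 * (k : ℕ))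
  | .s1 h, .s2 k => sMulS F 1 (3 * (h : ℕ)) 2 (3 * (k : ℕ))
  | .s2 k, .s1 h => sMulS F 1 (3 * (h : ℕ)) 2 (3 * (k : ℕ))
  | .s2 h, .s2 k => sMulS F 2 (3 * (h : ℕ)) 2 (3 * (k : ℕ))

/-- The commutative bilinear product of `Ĥ`, as a bilinear map. -/
noncomputable def hatMul : HatH F →ₗ[F] HatH F →ₗ[F] HatH F :=
  Finsupp.lift (HatH F →ₗ[F] HatH F) F HatB fun x => Finsupp.lift (HatH F) F HatB (mulB F x)

/-- The product of two elements of `Ĥ`. -/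
noncomputable def hmul (x y : HatH F) : HatH F := hatMul F x y

/-!
The product `â_i â_j = −2(â_i + â_j) + ŝ_{ī,|i−j|}` recovers every `ŝ_{r̄,n}` from two `â`'s,
in particular `ŝ_{0̄,1}` from `â₀, â₁`. Since `3 ∤ 1`, the correction term of (Ĥ2) vanishes
for `j = 1`, so `â_i ŝ_{0̄,1} ≡ â_{i−1} + â_{i+1}` modulo `â_i` and `ŝ_{0̄,1}`: this three-term
recurrence produces every `â_i` from `â₀, â₁`, and then every `ŝ_{r̄,n}`.
-/

lemma hmul_single_single (b b' : HatB) :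
    hmul F (Finsupp.single b 1) (Finsupp.single b' 1) = mulB F b b' := by
  simp [hmul, hatMul]

lemma hmul_aHat_aHat (i j : ℤ) :
    hmul F (aHat F i) (aHat F j) =
      (-2 : F) • (aHat F i + aHat F j) + sHat F (i : ZMod 3) (i - j).natAbs :=
  hmul_single_single F _ _

lemma sHat_one (r : ZMod 3) : sHat F r 1 = Finsupp.single (HatB.s0 1) 1 := by
  simp [sHat]

lemma hmul_aHat_sHat_one (i : ℤ) :
    hmul F (aHat F i) (sHat F 0 1) =
      (-2 : F) • aHat F i + (aHat F (i - 1) + aHat F (i + 1)) - sHat F 0 1 := by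
  rw [aHat, sHat_one, hmul_single_single]
  show aMulS F i 0 ((1 : ℕ+) : ℕ) = _
  simp [aMulS, sHat_one, aHat, Finsupp.smul_single]

lemma sHat_zero_coe (j : ℕ+) : sHat F 0 (j : ℕ) = Finsupp.single (HatB.s0 j) 1 := by
  obtain ⟨j, hj⟩ := j
  simp [sHat, hj.ne']

lemma sHat_one_three_mul (k : ℕ+) :
    sHat F 1 (3 * (k : ℕ)) = Finsupp.single (HatB.s1 k) 1 := by
  obtain ⟨k, hk⟩ := k
  simp [sHat, hk.ne', Nat.mul_div_cancel_left _ (by norm_num : 0 < 3)]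

lemma sHat_two_three_mul (k : ℕ+) :
    sHat F 2 (3 * (k : ℕ)) = Finsupp.single (HatB.s2 k) 1 := by
  obtain ⟨k, hk⟩ := k
  simp [sHat, hk.ne', Nat.mul_div_cancel_left _ (by norm_num : 0 < 3),
    (by decide : (2 : ZMod 3) ≠ 0), (by decide : (2 : ZMod 3) ≠ 1)]

lemma eq_top_of_single_one_mem {α R : Type*} [Semiring R]
    {p : Submodule R (α →₀ R)} (h : ∀ a, Finsupp.single a 1 ∈ p) : p = ⊤ :=
  eq_top_iff.2 <| (Finsupp.basisSingleOne (R := R) (ι := α)).span_eq.symm.le.trans <|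
    Submodule.span_le.2 <| Set.range_subset_iff.2 fun a => by simpa using h a

section ClosedSubspace

variable {F} {p : Submodule F (HatH F)} (hclosed : ∀ x ∈ p, ∀ y ∈ p, hmul F x y ∈ p)
include hclosed

lemma sHat_mem_of_aHat_mem {i j : ℤ} (hi : aHat F i ∈ p) (hj : aHat F j ∈ p) :
    sHat F (i : ZMod 3) (i - j).natAbs ∈ p := by
  have e : sHat F (i : ZMod 3) (i - j).natAbs =
      hmul F (aHat F i) (aHat F j) + (2 : F) • (aHat F i + aHat F j) := by
    rw [hmul_aHat_aHat]; module
  rw [e]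
  exact p.add_mem (hclosed _ hi _ hj) (p.smul_mem _ (p.add_mem hi hj))

lemma aHat_sub_one_add_aHat_add_one_mem {i : ℤ} (hs : sHat F 0 1 ∈ p) (hi : aHat F i ∈ p) :
    aHat F (i - 1) + aHat F (i + 1) ∈ p := by
  have e : aHat F (i - 1) + aHat F (i + 1) =
      hmul F (aHat F i) (sHat F 0 1) + (2 : F) • aHat F i + sHat F 0 1 := by
    rw [hmul_aHat_sHat_one]; module
  rw [e]
  exact p.add_mem (p.add_mem (hclosed _ hi _ hs) (p.smul_mem _ hi)) hs

lemma aHat_mem_of_zero_one (h0 : aHat F 0 ∈ p) (h1 : aHat F 1 ∈ p) (i : ℤ) :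
    aHat F i ∈ p := by
  have hs : sHat F 0 1 ∈ p := by simpa using sHat_mem_of_aHat_mem hclosed h0 h1
  have step := fun i => aHat_sub_one_add_aHat_add_one_mem hclosed (i := i) hs
  suffices h : aHat F i ∈ p ∧ aHat F (i + 1) ∈ p from h.1
  induction i using Int.induction_on with
  | zero => simpa using ⟨h0, h1⟩
  | succ k ih =>
    have hk : aHat F (k + 1 - 1) ∈ p := by simpa using ih.1
    exact ⟨ih.2, (p.add_mem_iff_right hk).1 (step (k + 1) ih.2)⟩
  | pred k ih =>
    have hk : aHat F (-k + 1) ∈ p := by simpa using ih.2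
    exact ⟨(p.add_mem_iff_left hk).1 (step (-k) ih.1), by simpa using ih.1⟩

lemma sHat_mem_of_forall_aHat_mem (ha : ∀ i, aHat F i ∈ p) (r : ZMod 3) (n : ℕ) :
    sHat F r n ∈ p := by
  have hr : ((r.val : ℤ) : ZMod 3) = r := by simp
  have hn : ((r.val : ℤ) - (r.val - n)).natAbs = n := by omega
  simpa [hr, hn] using sHat_mem_of_aHat_mem hclosed (ha r.val) (ha (r.val - n))

end ClosedSubspace

theorem generated_by_a0_a1 (p : Submodule F (HatH F))
    (h0 : aHat F 0 ∈ p) (h1 : aHat F 1 ∈ p)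
    (hclosed : ∀ x ∈ p, ∀ y ∈ p, hmul F x y ∈ p) : p = ⊤ := by
  have ha := aHat_mem_of_zero_one hclosed h0 h1
  have hs := sHat_mem_of_forall_aHat_mem hclosed ha
  refine eq_top_of_single_one_mem ?_
  rintro (i | j | k | k)
  · exact ha i
  · exact sHat_zero_coe F j ▸ hs 0 j
  · exact sHat_one_three_mul F k ▸ hs 1 _
  · exact sHat_two_three_mul F k ▸ hs 2 _

end HatAlgebra
end

section
/- For all i, j ∈ ℤ₊, in Ĥ one has û_i · v̂_j = v̂_{i,j}. -/
namespace HatAlgebra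

variable (F : Type*) [Field F]

/-- `û_i := −2â₀ + (â_i + â_{−i}) + 2ŝ_{0̄,i}`. -/
noncomputable def uHat (i : ℕ) : HatH F :=
  (-2 : F) • aHat F 0 + (aHat F (i : ℤ) + aHat F (-(i : ℤ))) + (2 : F) • sHat F 0 i

/-- `v̂_i := −2â₀ + (â_i + â_{−i}) − ŝ_{0̄,i}`. -/
noncomputable def vHat (i : ℕ) : HatH F :=
  (-2 : F) • aHat F 0 + (aHat F (i : ℤ) + aHat F (-(i : ℤ))) - sHat F 0 i

/-- `v̂_{i,j} := −2v̂_i − 2v̂_j + v̂_{|i−j|} + v̂_{i+j}`. -/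
noncomputable def vij (i j : ℕ) : HatH F :=
  (-2 : F) • vHat F i + (-2 : F) • vHat F j + vHat F (Nat.dist i j) + vHat F (i + j)


/-!
Write `A_n := −2â₀ + â_n + â_{−n}`, so that `û_i = A_i + 2ŝ_{0̄,i}` and `v̂_j = A_j − ŝ_{0̄,j}`.
In `A_i · ŝ_{0̄,j}` the `∗`-corrections coming from `â_i` and `â_{−i}` cancel, leaving
`−2A_i − 2A_j + A_{|i−j|} + A_{i+j}`; with multiplicity `−1 + 2 = 1` this is the `â`-part of
`v̂_{i,j}`. In `A_i · A_j` all `â`-terms cancel, and `A_i · A_j − 2ŝ_{0̄,i} ŝ_{0̄,j}` reduces to the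
`ŝ`-part `2(ŝ_{0̄,i} + ŝ_{0̄,j}) − ŝ_{0̄,|i−j|} − ŝ_{0̄,i+j}` of `v̂_{i,j}` once `5 = 0`, using
`ŝ_{r̄,n} + ŝ_{−r̄,n} = ŝ_{1̄,n} + ŝ_{2̄,n}` unless `r̄ = 0` and `3 ∣ n`.
-/

noncomputable def aPart (n : ℕ) : HatH F := (-2 : F) • aHat F 0 + (aHat F n + aHat F (-n))

variable {F}

@[simp] lemma hmul_add_left (x y z : HatH F) : hmul F (x + y) z = hmul F x z + hmul F y z := by
  simp [hmul]

@[simp] lemma hmul_add_right (x y z : HatH F) : hmul F x (y + z) = hmul F x y + hmul F x z := by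
  simp [hmul]

lemma hmul_sub_right (x y z : HatH F) : hmul F x (y - z) = hmul F x y - hmul F x z := by
  simp [hmul]

lemma hmul_smul_left (c : F) (x y : HatH F) : hmul F (c • x) y = c • hmul F x y := by
  simp [hmul]

lemma hmul_smul_right (c : F) (x y : HatH F) : hmul F x (c • y) = c • hmul F x y := by
  simp [hmul]

lemma hmul_single_single_s9 (x y : HatB) (c d : F) :
    hmul F (Finsupp.single x c) (Finsupp.single y d) = (c * d) • mulB F x y := by
  simp [hmul, hatMul, mul_smul]

lemma sHat_zero_right (r : ZMod 3) : sHat F r 0 = 0 := by simp [sHat]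

lemma sHat_eq_sHat_zero {r : ZMod 3} {n : ℕ} (h : 3 ∣ n → r = 0) : sHat F r n = sHat F 0 n := by
  by_cases h3 : 3 ∣ n
  · rw [h h3]
  · simp [sHat, h3]

lemma sHat_zero_eq_single {n : ℕ} (hn : n ≠ 0) :
    sHat F 0 n = Finsupp.single (HatB.s0 ⟨n, Nat.pos_of_ne_zero hn⟩) 1 := by
  simp [sHat, hn]

lemma sHat_natCast_self (n : ℕ) : sHat F (n : ZMod 3) n = sHat F 0 n :=
  sHat_eq_sHat_zero (ZMod.natCast_eq_zero_iff n 3).mpr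

lemma sHat_neg_natCast_self (n : ℕ) : sHat F (-(n : ZMod 3)) n = sHat F 0 n :=
  sHat_eq_sHat_zero fun h => by rw [(ZMod.natCast_eq_zero_iff n 3).mpr h, neg_zero]

lemma sHat_intCast_natAbs_sub (x y : ℤ) :
    sHat F (x : ZMod 3) (x - y).natAbs = sHat F (y : ZMod 3) (x - y).natAbs := by
  by_cases h3 : 3 ∣ (x - y).natAbs
  · congr 1
    rw [ZMod.intCast_eq_intCast_iff_dvd_sub]
    omega
  · exact (sHat_eq_sHat_zero (absurd · h3)).trans (sHat_eq_sHat_zero (absurd · h3)).symm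

lemma sHat_add_sHat_neg {r : ZMod 3} {n : ℕ} (h : r ≠ 0 ∨ ¬ 3 ∣ n) :
    sHat F r n + sHat F (-r) n = sSum F n - sHat F 0 n := by
  rcases h with hr | hn
  · unfold sSum
    obtain rfl | rfl : r = 1 ∨ r = 2 := by revert r; decide
    · rw [show -(1 : ZMod 3) = 2 from rfl]; abel
    · rw [show -(2 : ZMod 3) = 1 from rfl]; abel
  · simp only [sSum, sHat_eq_sHat_zero (absurd · hn)]
    abel

lemma sMulS_self_comm (r : ZMod 3) (i j : ℕ) : sMulS F r i r j = sMulS F r j r i := by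
  simp only [sMulS, if_true, Nat.dist_comm i j, add_comm i j, and_comm (a := 3 ∣ i),
    add_comm (sHat F r i)]

lemma mulB_comm (x y : HatB) : mulB F x y = mulB F y x := by
  cases x <;> cases y <;> try rfl
  all_goals simp only [mulB, sMulS_self_comm]
  rw [add_comm (aHat F _), sHat_intCast_natAbs_sub, ← Int.natAbs_neg, neg_sub]

lemma hmul_comm (x y : HatH F) : hmul F x y = hmul F y x := by
  induction x using Finsupp.induction_linear with
  | zero => simp [hmul]
  | add => simp_all
  | single b c =>
    induction y using Finsupp.induction_linear with
    | zero => simp [hmul]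
    | add => simp_all
    | single b' d => rw [hmul_single_single_s9, hmul_single_single_s9, mulB_comm, mul_comm]

lemma aHat_mul_aHat (x y : ℤ) :
    hmul F (aHat F x) (aHat F y) =
      (-2 : F) • (aHat F x + aHat F y) + sHat F (x : ZMod 3) (x - y).natAbs := by
  rw [aHat, aHat, hmul_single_single_s9, one_mul, one_smul]; rfl

lemma aHat_mul_sHat_zero (x : ℤ) {n : ℕ} (hn : n ≠ 0) :
    hmul F (aHat F x) (sHat F 0 n) = aMulS F x 0 n := by
  rw [aHat, sHat_zero_eq_single hn, hmul_single_single_s9, one_mul, one_smul]; rfl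

lemma sHat_zero_mul_sHat_zero {i j : ℕ} (hi : i ≠ 0) (hj : j ≠ 0) :
    hmul F (sHat F 0 i) (sHat F 0 j) =
      if 3 ∣ i ∧ 3 ∣ j then
        (2 : F) • (sHat F 0 i + sHat F 0 j) - (sHat F 0 (Nat.dist i j) + sHat F 0 (i + j))
      else
        (2 : F) • (sHat F 0 i + sHat F 0 j) - (2 : F) • (sSum F (Nat.dist i j) + sSum F (i + j)) := by
  have h : hmul F (sHat F 0 i) (sHat F 0 j) = sMulS F 0 i 0 j := by
    rw [sHat_zero_eq_single hi, sHat_zero_eq_single hj, hmul_single_single_s9, one_mul, one_smul]; rfl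
  rw [h, sMulS, if_pos rfl]

lemma hatC_neg_zero (x : ZMod 3) : hatC (-x) 0 = -hatC x 0 := by
  revert x; decide

lemma natAbs_natCast_sub_natCast (i j : ℕ) : ((i : ℤ) - j).natAbs = Nat.dist i j := by
  unfold Nat.dist; omega

lemma aHat_add_aHat_neg_dist (i j : ℕ) :
    aHat F (Nat.dist i j : ℤ) + aHat F (-(Nat.dist i j : ℤ)) = aHat F (i - j) + aHat F (j - i) := by
  rcases le_total i j with h | h
  · rw [Nat.dist_eq_sub_of_le h, Nat.cast_sub h, neg_sub, add_comm]
  · rw [Nat.dist_eq_sub_of_le_right h, Nat.cast_sub h, neg_sub]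

lemma aPart_mul_sHat_zero (i : ℕ) {j : ℕ} (hj : j ≠ 0) :
    hmul F (aPart F i) (sHat F 0 j) =
      (-2 : F) • aPart F i + (-2 : F) • aPart F j + aPart F (Nat.dist i j) + aPart F (i + j) := by
  simp only [aPart, hmul_add_left, hmul_smul_left, aHat_mul_sHat_zero _ hj, aMulS, Int.cast_neg,
    Int.cast_natCast, hatC_neg_zero, aHat_add_aHat_neg_dist, Nat.cast_add, zero_sub, zero_add,
    neg_add', neg_add_eq_sub, Int.cast_zero, show hatC 0 0 = 0 from rfl]
  module

lemma aPart_mul_aPart (i j : ℕ) :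
    hmul F (aPart F i) (aPart F j) = (-4 : F) • (sHat F 0 i + sHat F 0 j)
      + (sHat F i (Nat.dist i j) + sHat F (-i) (Nat.dist i j))
      + (sHat F i (i + j) + sHat F (-i) (i + j)) := by
  simp only [aPart, hmul_add_left, hmul_add_right, hmul_smul_left, hmul_smul_right, aHat_mul_aHat,
    Int.cast_neg, Int.cast_natCast, Int.cast_zero, sub_zero, zero_sub, sub_neg_eq_add,
    Int.natAbs_neg, Int.natAbs_natCast, natAbs_natCast_sub_natCast, ← neg_add', ← Nat.cast_add,
    neg_add_eq_sub, zero_add, Int.natAbs_zero, sHat_zero_right, sHat_natCast_self,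
    sHat_neg_natCast_self, Nat.dist_comm j i]
  module

lemma aPart_mul_aPart_sub_two_smul_sHat_zero_mul [CharP F 5] {i j : ℕ} (hi : i ≠ 0) (hj : j ≠ 0) :
    hmul F (aPart F i) (aPart F j) - (2 : F) • hmul F (sHat F 0 i) (sHat F 0 j) =
      (2 : F) • (sHat F 0 i + sHat F 0 j) - (sHat F 0 (Nat.dist i j) + sHat F 0 (i + j)) := by
  have h5 : (5 : F) = 0 := by exact_mod_cast CharP.cast_eq_zero F 5
  rw [aPart_mul_aPart, sHat_zero_mul_sHat_zero hi hj]
  split_ifs with h3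
  · rw [(ZMod.natCast_eq_zero_iff i 3).mpr h3.1, neg_zero]
    linear_combination (norm := module) h5 • ((-2 : F) • (sHat F 0 i + sHat F 0 j)
      + sHat F 0 (Nat.dist i j) + sHat F 0 (i + j))
  · have hr : ∀ n, (3 ∣ i → ¬ 3 ∣ n) → (i : ZMod 3) ≠ 0 ∨ ¬ 3 ∣ n := fun n hn =>
      or_iff_not_imp_left.mpr fun hi0 => hn ((ZMod.natCast_eq_zero_iff i 3).mp (not_not.mp hi0))
    rw [sHat_add_sHat_neg (hr _ fun h => by unfold Nat.dist; omega),
      sHat_add_sHat_neg (hr _ fun h => by omega)]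
    linear_combination (norm := module) h5 • ((-2 : F) • (sHat F 0 i + sHat F 0 j)
      + sSum F (Nat.dist i j) + sSum F (i + j))

/-- For all `i, j ∈ ℤ₊`, `û_i · v̂_j = v̂_{i,j}`. -/
theorem uHat_mul_vHat [CharP F 5] (i j : ℕ) (hi : 0 < i) (hj : 0 < j) :
    hmul F (uHat F i) (vHat F j) = vij F i j := by
  have hu : uHat F i = aPart F i + (2 : F) • sHat F 0 i := rfl
  have hv : ∀ n, vHat F n = aPart F n - sHat F 0 n := fun _ => rfl
  have hsa : hmul F (sHat F 0 i) (aPart F j) = hmul F (aPart F j) (sHat F 0 i) := hmul_comm _ _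
  have key := aPart_mul_aPart_sub_two_smul_sHat_zero_mul (F := F) hi.ne' hj.ne'
  simp only [hu, hv, vij, hmul_add_left, hmul_sub_right, hmul_smul_left, hsa,
    aPart_mul_sHat_zero _ hi.ne', aPart_mul_sHat_zero _ hj.ne', Nat.dist_comm j i, add_comm j i]
  linear_combination (norm := module) key

end HatAlgebra
end
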